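/- Let τ be an m-dimensional translation from the signature Σ to the signature Θ. Then for every first-order formula A over Σ, ρ_∃(A^τ) ≤ ρ_∃(A) + ρ*(τ). -/
import Mathlib


/-- First-order formulas over a relational signature given by a type `P` of
predicate symbols with arities `ar`.  Atomic formulas are `⊤`, `⊥` and
`P(x₀,…,x₍ₙ₋₁₎)` for an `n`-ary predicate symbol `P` applied to variables
(named by natural numbers);  quantifiers carry the name of the bound variable. -/
inductive Fml (P : Type) (ar : P → ℕ) : Type
  | verum : Fml P ar
  | falsum : Fml P ar
  | atom : (p : P) → (Fin (ar p) → ℕ) → Fml P ar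
  | neg : Fml P ar → Fml P ar
  | and : Fml P ar → Fml P ar → Fml P ar
  | or : Fml P ar → Fml P ar → Fml P ar
  | imp : Fml P ar → Fml P ar → Fml P ar
  | ex : ℕ → Fml P ar → Fml P ar
  | all : ℕ → Fml P ar → Fml P ar

/-- The pair `(ρ_∃ A, ρ_∀ A)` of complexity measures, defined by simultaneous
recursion on the formula `A`. -/
def rho {P : Type} {ar : P → ℕ} : Fml P ar → ℕ × ℕ
  | Fml.verum => (1, 1)
  | Fml.falsum => (1, 1)
  | Fml.atom _ _ => (1, 1)
  | Fml.neg B => ((rho B).2, (rho B).1)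
  | Fml.and B C => (max (rho B).1 (rho C).1, max (rho B).2 (rho C).2)
  | Fml.or B C => (max (rho B).1 (rho C).1, max (rho B).2 (rho C).2)
  | Fml.imp B C => (max (rho B).2 (rho C).1, max (rho B).1 (rho C).2)
  | Fml.ex _ B => ((rho B).1, (rho B).1 + 1)
  | Fml.all _ B => ((rho B).2 + 1, (rho B).2)

/-- The complexity measure `ρ_∃`. -/
def rhoE {P : Type} {ar : P → ℕ} (A : Fml P ar) : ℕ := (rho A).1

/-- The complexity measure `ρ_∀`. -/
def rhoA {P : Type} {ar : P → ℕ} (A : Fml P ar) : ℕ := (rho A).2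

/-- The complexity measure `ρ₀(A) = max(ρ_∃(A), ρ_∀(A))`. -/
def rho0 {P : Type} {ar : P → ℕ} (A : Fml P ar) : ℕ := max (rhoE A) (rhoA A)

/-- Renaming of variables (both free occurrences and binders) along `f`. -/
def rename {P : Type} {ar : P → ℕ} (f : ℕ → ℕ) : Fml P ar → Fml P ar
  | Fml.verum => Fml.verum
  | Fml.falsum => Fml.falsum
  | Fml.atom p xs => Fml.atom p (f ∘ xs)
  | Fml.neg A => Fml.neg (rename f A)
  | Fml.and A B => Fml.and (rename f A) (rename f B)
  | Fml.or A B => Fml.or (rename f A) (rename f B)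
  | Fml.imp A B => Fml.imp (rename f A) (rename f B)
  | Fml.ex v A => Fml.ex (f v) (rename f A)
  | Fml.all v A => Fml.all (f v) (rename f A)

/-- The set of free variables of a formula. -/
def fv {P : Type} {ar : P → ℕ} : Fml P ar → Set ℕ
  | Fml.verum => ∅
  | Fml.falsum => ∅
  | Fml.atom _ xs => Set.range xs
  | Fml.neg A => fv A
  | Fml.and A B => fv A ∪ fv B
  | Fml.or A B => fv A ∪ fv B
  | Fml.imp A B => fv A ∪ fv B
  | Fml.ex v A => fv A \ {v}
  | Fml.all v A => fv A \ {v}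

/-- An `m`-dimensional translation `τ` from the signature `(P, ar)` to the
signature `(Q, arQ)`.  In the target language, the `m`-tuple of variables
`x⃗` corresponding to a source variable `x` is `Nat.pair x 0, …, Nat.pair x (m-1)`
(these are distinct since `Nat.pair` is injective); the domain formula `δ` is
written with free variables among `v₀ = 0, …, v₍ₘ₋₁₎ = m-1`, and the formula
`F(p)` interpreting an `n`-ary predicate `p` is written with free variables among
the `m`-tuples `v⃗ᵢ = (Nat.pair i 0, …, Nat.pair i (m-1))` for `i < n`. -/
structure Translation (P : Type) (ar : P → ℕ) (Q : Type) (arQ : Q → ℕ)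
    (m : ℕ) : Type where
  /-- the domain formula `δ(v₀,…,v₍ₘ₋₁₎)` -/
  dom : Fml Q arQ
  /-- the interpretation `F(p)(v⃗₀,…,v⃗₍ₙ₋₁₎)` of each predicate symbol `p` -/
  rel : (p : P) → Fml Q arQ
  dom_fv : fv dom ⊆ {k | k < m}
  rel_fv : ∀ p : P, fv (rel p) ⊆
    {k | ∃ i < ar p, ∃ j < m, k = Nat.pair i j}

/-- `δ(x⃗)`: the domain formula with the tuple `x⃗` substituted for `v₀,…,v₍ₘ₋₁₎`. -/
def domAt {P : Type} {ar : P → ℕ} {Q : Type} {arQ : Q → ℕ} {m : ℕ}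
    (τ : Translation P ar Q arQ m) (x : ℕ) : Fml Q arQ :=
  rename (fun j => if j < m then Nat.pair x j else j) τ.dom

/-- The substitution used to translate an atomic formula `p(x₀,…,x₍ₙ₋₁₎)`:
the variable `vᵢⱼ = Nat.pair i j` of `F(p)` is sent to the `j`-th component
`Nat.pair (xs i) j` of the tuple `x⃗ᵢ`. -/
def atomSubst (arp : ℕ) (xs : Fin arp → ℕ) (k : ℕ) : ℕ :=
  if h : (Nat.unpair k).1 < arp then
    Nat.pair (xs ⟨(Nat.unpair k).1, h⟩) (Nat.unpair k).2
  else k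

/-- A block `∃ v₁ … ∃ vₖ A` of existential quantifiers. -/
def exBlock {Q : Type} {arQ : Q → ℕ} : List ℕ → Fml Q arQ → Fml Q arQ
  | [], A => A
  | v :: vs, A => Fml.ex v (exBlock vs A)

/-- A block `∀ v₁ … ∀ vₖ A` of universal quantifiers. -/
def allBlock {Q : Type} {arQ : Q → ℕ} : List ℕ → Fml Q arQ → Fml Q arQ
  | [], A => A
  | v :: vs, A => Fml.all v (allBlock vs A)

/-- The translation `A ↦ A^τ`:  it replaces atomic formulas by the corresponding
substitution instances of the `F(p)`, commutes with `¬, ∧, ∨, →`, and relativizes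
quantifiers: `(∃x A)^τ = ∃x⃗ (δ(x⃗) ∧ A^τ)` and `(∀x A)^τ = ∀x⃗ (δ(x⃗) → A^τ)`. -/
def transl {P : Type} {ar : P → ℕ} {Q : Type} {arQ : Q → ℕ} {m : ℕ}
    (τ : Translation P ar Q arQ m) : Fml P ar → Fml Q arQ
  | Fml.verum => Fml.verum
  | Fml.falsum => Fml.falsum
  | Fml.atom p xs => rename (atomSubst (ar p) xs) (τ.rel p)
  | Fml.neg A => Fml.neg (transl τ A)
  | Fml.and A B => Fml.and (transl τ A) (transl τ B)
  | Fml.or A B => Fml.or (transl τ A) (transl τ B)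
  | Fml.imp A B => Fml.imp (transl τ A) (transl τ B)
  | Fml.ex x A =>
      exBlock ((List.range m).map (Nat.pair x))
        (Fml.and (domAt τ x) (transl τ A))
  | Fml.all x A =>
      allBlock ((List.range m).map (Nat.pair x))
        (Fml.imp (domAt τ x) (transl τ A))

/-- `ρ*(τ)`: the maximum of `ρ₀(δ)` and the `ρ₀(F(p))` for `p` a predicate symbol
of the (finite) source signature. -/
def rhoStar {P : Type} [Fintype P] {ar : P → ℕ} {Q : Type} {arQ : Q → ℕ}
    {m : ℕ} (τ : Translation P ar Q arQ m) : ℕ :=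
  max (rho0 τ.dom) (Finset.univ.sup fun p => rho0 (τ.rel p))

lemma rho_rename {P : Type} {ar : P → ℕ} (f : ℕ → ℕ) (A : Fml P ar) :
    rho (rename f A) = rho A := by
  induction A with
  | verum => rfl
  | falsum => rfl
  | atom p xs => rfl
  | neg B ih => simp [rename, rho, ih]
  | and B C ihB ihC => simp [rename, rho, ihB, ihC]
  | or B C ihB ihC => simp [rename, rho, ihB, ihC]
  | imp B C ihB ihC => simp [rename, rho, ihB, ihC]
  | ex v B ih => simp [rename, rho, ih]
  | all v B ih => simp [rename, rho, ih]

lemma rho_diff {P : Type} {ar : P → ℕ} (A : Fml P ar) :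
    (rho A).1 ≤ (rho A).2 + 1 ∧ (rho A).2 ≤ (rho A).1 + 1 := by
  induction A with
  | verum => simp [rho]
  | falsum => simp [rho]
  | atom p xs => simp [rho]
  | neg B ih => exact ⟨ih.2, ih.1⟩
  | and B C ihB ihC =>
      simp only [rho]
      omega
  | or B C ihB ihC =>
      simp only [rho]
      omega
  | imp B C ihB ihC =>
      simp only [rho]
      omega
  | ex v B ih => simp only [rho]; omega
  | all v B ih => simp only [rho]; omega

lemma rho_exBlock_fst {Q : Type} {arQ : Q → ℕ} (l : List ℕ) (A : Fml Q arQ) :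
    (rho (exBlock l A)).1 = (rho A).1 := by
  induction l with
  | nil => rfl
  | cons v vs ih => simp [exBlock, rho, ih]

lemma rho_allBlock_snd {Q : Type} {arQ : Q → ℕ} (l : List ℕ) (A : Fml Q arQ) :
    (rho (allBlock l A)).2 = (rho A).2 := by
  induction l with
  | nil => rfl
  | cons v vs ih => simp [allBlock, rho, ih]

lemma rho_exBlock_cons {Q : Type} {arQ : Q → ℕ} (v : ℕ) (vs : List ℕ)
    (A : Fml Q arQ) : rho (exBlock (v :: vs) A) = ((rho A).1, (rho A).1 + 1) := by
  simp [exBlock, rho, rho_exBlock_fst]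

lemma rho_allBlock_cons {Q : Type} {arQ : Q → ℕ} (v : ℕ) (vs : List ℕ)
    (A : Fml Q arQ) : rho (allBlock (v :: vs) A) = ((rho A).2 + 1, (rho A).2) := by
  simp [allBlock, rho, rho_allBlock_snd]

lemma rho_transl_le {P : Type} [Fintype P] {ar : P → ℕ} {Q : Type}
    {arQ : Q → ℕ} {m : ℕ} (τ : Translation P ar Q arQ m) (A : Fml P ar) :
    (rho (transl τ A)).1 ≤ (rho A).1 + rhoStar τ ∧
    (rho (transl τ A)).2 ≤ (rho A).2 + rhoStar τ := by
  set s := rhoStar τ with hs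
  have hdom1 : (rho τ.dom).1 ≤ s := le_trans (le_max_left _ _) (le_max_left _ _)
  have hdom2 : (rho τ.dom).2 ≤ s := le_trans (le_max_right _ _) (le_max_left _ _)
  have hdomAt : ∀ x, rho (domAt τ x) = rho τ.dom := fun x => rho_rename _ _
  induction A with
  | verum => simp [transl, rho]
  | falsum => simp [transl, rho]
  | atom p xs =>
      have h : rho0 (τ.rel p) ≤ s := by
        refine le_trans ?_ (le_max_right _ _)
        exact Finset.le_sup (f := fun p => rho0 (τ.rel p)) (Finset.mem_univ p)
      have h1 : (rho (τ.rel p)).1 ≤ s := le_trans (le_max_left _ _) h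
      have h2 : (rho (τ.rel p)).2 ≤ s := le_trans (le_max_right _ _) h
      simp only [transl, rho, rho_rename]
      omega
  | neg B ih => simp only [transl, rho]; omega
  | and B C ihB ihC => simp only [transl, rho]; omega
  | or B C ihB ihC => simp only [transl, rho]; omega
  | imp B C ihB ihC => simp only [transl, rho]; omega
  | ex x B ih =>
      have hd := rho_diff B
      simp only [transl, rho]
      cases h : (List.range m).map (Nat.pair x) with
      | nil =>
          simp only [exBlock, rho, rho_exBlock_fst, hdomAt]
          omega
      | cons v vs =>
          rw [rho_exBlock_cons]
          simp only [rho, hdomAt]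
          omega
  | all x B ih =>
      have hd := rho_diff B
      simp only [transl, rho]
      cases h : (List.range m).map (Nat.pair x) with
      | nil =>
          simp only [allBlock, rho, hdomAt]
          omega
      | cons v vs =>
          rw [rho_allBlock_cons]
          simp only [rho, hdomAt]
          omega

/-- Let `τ` be an `m`-dimensional translation from the signature `Σ` to the
signature `Θ`.  Then for every first-order formula `A` over `Σ`,
`ρ_∃(A^τ) ≤ ρ_∃(A) + ρ*(τ)`. -/
theorem rhoE_transl_le {P : Type} [Fintype P] {ar : P → ℕ} {Q : Type}
    {arQ : Q → ℕ} {m : ℕ} (τ : Translation P ar Q arQ m) (A : Fml P ar) :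
    rhoE (transl τ A) ≤ rhoE A + rhoStar τ := by
  exact (rho_transl_le τ A).1
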